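/- arXiv:1409.5271 — 2 statements merged into one kernel-verified Lean document; each statement's English description precedes it below -/
import Mathlib

section
/- Let ⟨·⟩ be a stationary ensemble on Ω = [λ,∞)^E, fix ξ ∈ R^d with |ξ| ≤ 1, and let φ(a;·) be the corrector. Then for every 1 ≤ p < ∞, Σ_{i=1}^d ⟨(Σ_{e∈E} (∂_e(D_iφ + ξ_i))²)^p⟩ ≤ λ^{−2p} Σ_{i=1}^d ⟨|D_iφ + ξ_i|^{2p}⟩. -/
open MeasureTheory Filter Set

noncomputable section

namespace DiscHom

/-- Vertices of the discrete torus `(ℤ/Lℤ)^d`. -/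
abbrev DV (d L : ℕ) := Fin d → ZMod L

/-- Edges of the discrete torus: the edge `(x, i)` is `[x, x+e_i]`. -/
abbrev DE (d L : ℕ) := DV d L × Fin d

/-- The `i`-th coordinate unit vector. -/
def dunit (d L : ℕ) (i : Fin d) : DV d L := Pi.single i 1

/-- Discrete gradient: `∇u([x,x+e_i]) = u(x+e_i) - u(x)`. -/
def dgrad (d L : ℕ) (u : DV d L → ℝ) (b : DE d L) : ℝ :=
  u (b.1 + dunit d L b.2) - u b.1

/-- Negative discrete divergence:
`(∇*g)(x) = Σ_i (g([x-e_i,x]) - g([x,x+e_i]))`. -/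
def dstar (d L : ℕ) (g : DE d L → ℝ) (x : DV d L) : ℝ :=
  ∑ i : Fin d, (g (x - dunit d L i, i) - g (x, i))

/-- `φ` is the corrector for the coefficient field `a` in direction `ξ`:
`∇*(a(∇φ + ξ)) = 0` with the normalization `φ(0) = 0`. -/
def IsDCorrector (d L : ℕ) (a : DE d L → ℝ) (ξ : Fin d → ℝ) (φ : DV d L → ℝ) : Prop :=
  φ 0 = 0 ∧ ∀ x : DV d L, dstar d L (fun b => a b * (dgrad d L φ b + ξ b.2)) x = 0

/-- Mixed second difference of a two-point function: discrete gradient in the first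
variable along the edge `b` of the discrete gradient in the second variable along the
edge `e`. -/
def ddG (d L : ℕ) (G : DV d L → DV d L → ℝ) (b e : DE d L) : ℝ :=
  dgrad d L (fun x => dgrad d L (G x) e) b

end DiscHom

/-!
On `{a ≥ λ}` the corrector is `φ(a) = T(a)⁻¹ (-∇*(a ξ))`, where `T(a) u = ∇*(a ∇u) + u(0)` is
invertible and affine in `a`; differentiating gives
`∂_e (D_iφ + ξ_i) = -(∇φ + ξ)(e) · ∇_{b_i}∇_e G`, with `G` the Green function of `∇*(a ∇·)` and
`b_i = [0, e_i]`. Testing the Green equation against the Green function shows that `∇∇G` is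
symmetric and that `Σ_b (∇_b∇_e G)² ≤ λ⁻²`. Jensen's inequality with the weights
`(∇_{b_i}∇_e G)²` bounds the `p`-th power of the sum over `e` by
`λ^{-2(p-1)} Σ_e (∇_{b_i}∇_e G)² |∇φ + ξ|^{2p}(e)`; stationarity (mass transport) moves `e` to
the origin, and the Green bound applied once more in the other variable gives `λ⁻²`.
-/

theorem HasFDerivAt.ringInverse_apply {𝕜 X E : Type*} [NontriviallyNormedField 𝕜]
    [NormedAddCommGroup X] [NormedSpace 𝕜 X] [NormedAddCommGroup E] [NormedSpace 𝕜 E]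
    [CompleteSpace E] {T : X → E →L[𝕜] E} {T' : X →L[𝕜] E →L[𝕜] E} {f : X → E}
    {f' : X →L[𝕜] E} {a : X} (hT : HasFDerivAt T T' a) (hf : HasFDerivAt f f' a)
    (ha : IsUnit (T a)) :
    HasFDerivAt (fun x => Ring.inverse (T x) (f x))
      ((Ring.inverse (T a)).comp (f' - T'.flip (Ring.inverse (T a) (f a)))) a := by
  obtain ⟨u, hu⟩ := ha
  refine (((hu ▸ hasFDerivAt_ringInverse u).comp a hT).clm_apply hf).congr_fderiv ?_
  ext v
  simp [← hu, sub_eq_add_neg]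

theorem DifferentiableAt.fderiv_apply_eq_of_eq_on_ray {E F : Type*} [NormedAddCommGroup E]
    [NormedSpace ℝ E] [NormedAddCommGroup F] [NormedSpace ℝ F] {f g : E → F}
    {g' : E →L[ℝ] F} {a v : E} (hf : DifferentiableAt ℝ f a) (hg : HasFDerivAt g g' a)
    (hfg : ∀ t : ℝ, 0 ≤ t → f (a + t • v) = g (a + t • v)) : fderiv ℝ f a v = g' v := by
  have hline : HasDerivAt (fun t : ℝ => a + t • v) v 0 := by
    simpa using ((hasDerivAt_id (0 : ℝ)).smul_const v).const_add a
  have hf' := (hf.hasFDerivAt.comp_hasDerivAt_of_eq 0 hline (by simp)).hasDerivWithinAt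
    (s := Set.Ici 0)
  have hg' := (hg.comp_hasDerivAt_of_eq 0 hline (by simp)).hasDerivWithinAt (s := Set.Ici 0)
  exact (uniqueDiffWithinAt_Ici 0).eq_deriv _ hf'
    (hg'.congr_of_mem (fun t ht => hfg t ht) Set.self_mem_Ici)

theorem Real.rpow_inner_le_weight_mul_Lp_of_nonneg {ι : Type*} (s : Finset ι) {p : ℝ}
    (hp : 1 ≤ p) (w f : ι → ℝ) (hw : ∀ i, 0 ≤ w i) (hf : ∀ i, 0 ≤ f i) :
    (∑ i ∈ s, w i * f i) ^ p ≤ (∑ i ∈ s, w i) ^ (p - 1) * ∑ i ∈ s, w i * f i ^ p := by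
  have hW : 0 ≤ ∑ i ∈ s, w i := Finset.sum_nonneg fun i _ => hw i
  have hWf : 0 ≤ ∑ i ∈ s, w i * f i ^ p :=
    Finset.sum_nonneg fun i _ => mul_nonneg (hw i) (Real.rpow_nonneg (hf i) p)
  have hp0 : p ≠ 0 := by positivity
  calc (∑ i ∈ s, w i * f i) ^ p
      ≤ ((∑ i ∈ s, w i) ^ (1 - p⁻¹) * (∑ i ∈ s, w i * f i ^ p) ^ p⁻¹) ^ p :=
        Real.rpow_le_rpow (Finset.sum_nonneg fun i _ => mul_nonneg (hw i) (hf i))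
          (Real.inner_le_weight_mul_Lp_of_nonneg s hp w f hw hf) (by linarith)
    _ = (∑ i ∈ s, w i) ^ (p - 1) * ∑ i ∈ s, w i * f i ^ p := by
        rw [Real.mul_rpow (by positivity) (by positivity), ← Real.rpow_mul hW,
          ← Real.rpow_mul hWf, inv_mul_cancel₀ hp0, Real.rpow_one, sub_mul, one_mul,
          inv_mul_cancel₀ hp0]

namespace DiscHom

variable {d L : ℕ}

lemma dgrad_comp_add (u : DV d L → ℝ) (z : DV d L) (b : DE d L) :
    dgrad d L (fun x => u (x + z)) b = dgrad d L u (b.1 + z, b.2) := by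
  simp only [dgrad, add_right_comm]

lemma dstar_comp_add (g : DE d L → ℝ) (z x : DV d L) :
    dstar d L (fun b => g (b.1 + z, b.2)) x = dstar d L g (x + z) := by
  simp only [dstar, sub_add_eq_add_sub]

lemma single_comp_shift (e : DE d L) (z : DV d L) :
    (fun b : DE d L => (Pi.single (e.1 + z, e.2) 1 : DE d L → ℝ) (b.1 + z, b.2))
      = Pi.single e 1 := by
  funext b
  simp [Pi.single_apply, Prod.ext_iff]

section LinearMaps

open ContinuousLinearMap

def gradCLM : (DV d L → ℝ) →L[ℝ] (DE d L → ℝ) :=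
  ContinuousLinearMap.pi fun b =>
    proj (R := ℝ) (φ := fun _ => ℝ) (b.1 + dunit d L b.2) - proj b.1

@[simp] lemma gradCLM_apply (u : DV d L → ℝ) : gradCLM u = dgrad d L u := rfl

def divCLM : (DE d L → ℝ) →L[ℝ] (DV d L → ℝ) :=
  ContinuousLinearMap.pi fun x =>
    ∑ i, (proj (R := ℝ) (φ := fun _ => ℝ) (x - dunit d L i, i) - proj (x, i))

lemma divCLM_apply (g : DE d L → ℝ) : divCLM g = dstar d L g := by
  ext x
  simp [divCLM, dstar]

variable [NeZero L]

def weightedDiv : (DE d L → ℝ) →L[ℝ] (DE d L → ℝ) →L[ℝ] (DV d L → ℝ) :=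
  compL ℝ (DE d L → ℝ) (DE d L → ℝ) (DV d L → ℝ) divCLM ∘L mul ℝ (DE d L → ℝ)

lemma weightedDiv_apply (a w : DE d L → ℝ) :
    weightedDiv a w = dstar d L (fun b => a b * w b) := by
  rw [← divCLM_apply]
  rfl

def divGradCLM : (DE d L → ℝ) →L[ℝ] (DV d L → ℝ) →L[ℝ] (DV d L → ℝ) :=
  (compL ℝ (DV d L → ℝ) (DE d L → ℝ) (DV d L → ℝ)).flip gradCLM ∘L weightedDiv

/-- Adding the constant function `u 0` makes `∇*(a ∇·)` invertible; for a right-hand side of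
mean zero the solution is the one normalised by `u 0 = 0`. -/
def pinnedOp (a : DE d L → ℝ) : (DV d L → ℝ) →L[ℝ] (DV d L → ℝ) :=
  divGradCLM a + ContinuousLinearMap.pi fun _ => proj (R := ℝ) (φ := fun _ => ℝ) 0

end LinearMaps

variable [NeZero L] {a : DE d L → ℝ}

lemma sum_dstar_mul (g : DE d L → ℝ) (v : DV d L → ℝ) :
    ∑ x, dstar d L g x * v x = ∑ b, g b * dgrad d L v b := by
  have hshift (i : Fin d) :
      ∑ x, g (x - dunit d L i, i) * v x = ∑ x, g (x, i) * v (x + dunit d L i) :=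
    Fintype.sum_equiv (Equiv.subRight (dunit d L i)) _ _ fun x => by simp
  rw [Fintype.sum_prod_type, Finset.sum_comm]
  simp only [dstar, Finset.sum_mul]
  rw [Finset.sum_comm]
  refine Finset.sum_congr rfl fun i _ => ?_
  simp only [sub_mul, Finset.sum_sub_distrib, hshift, dgrad, mul_sub]

lemma sum_dstar (g : DE d L → ℝ) : ∑ x, dstar d L g x = 0 := by
  simpa [dgrad] using sum_dstar_mul g 1

lemma apply_eq_apply_zero_of_dgrad_eq_zero {u : DV d L → ℝ} (h : dgrad d L u = 0)
    (x : DV d L) : u x = u 0 := by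
  let periods : AddSubmonoid (DV d L) :=
    { carrier := {z | ∀ y, u (y + z) = u y}
      add_mem' := fun hz hw y => by rw [← add_assoc, hw, hz]
      zero_mem' := by simp }
  have hunit (i : Fin d) : dunit d L i ∈ periods := fun y =>
    sub_eq_zero.1 (congrFun h (y, i))
  have hx : x ∈ periods := by
    rw [← Finset.univ_sum_single x]
    refine sum_mem fun i _ => ?_
    rw [← ZMod.natCast_zmod_val (x i), ← nsmul_one, Pi.single_smul]
    exact nsmul_mem (hunit i) _
  simpa using hx 0

lemma pinnedOp_apply (a : DE d L → ℝ) (u : DV d L → ℝ) (x : DV d L) :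
    pinnedOp a u x = weightedDiv a (dgrad d L u) x + u 0 := rfl

lemma hasFDerivAt_pinnedOp (a : DE d L → ℝ) : HasFDerivAt pinnedOp divGradCLM a :=
  divGradCLM.hasFDerivAt.add_const _

lemma sum_weightedDiv_dgrad_mul (a : DE d L → ℝ) (u v : DV d L → ℝ) :
    ∑ x, weightedDiv a (dgrad d L u) x * v x = ∑ b, a b * dgrad d L u b * dgrad d L v b := by
  simp only [weightedDiv_apply, sum_dstar_mul]

lemma dgrad_eq_zero_of_weightedDiv_eq_zero (ha : ∀ b, 0 < a b) {u : DV d L → ℝ}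
    (h : weightedDiv a (dgrad d L u) = 0) : dgrad d L u = 0 := by
  have henergy : ∑ b, a b * dgrad d L u b * dgrad d L u b = 0 := by
    simp [← sum_weightedDiv_dgrad_mul, h]
  have hterms : ∀ b ∈ Finset.univ, 0 ≤ a b * dgrad d L u b * dgrad d L u b := fun b _ => by
    rw [mul_assoc]
    exact mul_nonneg (ha b).le (mul_self_nonneg _)
  funext b
  simpa [mul_assoc, (ha b).ne'] using
    (Finset.sum_eq_zero_iff_of_nonneg hterms).1 henergy b (Finset.mem_univ b)

lemma dgrad_eq_of_weightedDiv_eq (ha : ∀ b, 0 < a b) {u v : DV d L → ℝ}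
    (h : weightedDiv a (dgrad d L u) = weightedDiv a (dgrad d L v)) :
    dgrad d L u = dgrad d L v := by
  have hsub : dgrad d L (u - v) = dgrad d L u - dgrad d L v := map_sub gradCLM u v
  rw [← sub_eq_zero, ← hsub]
  exact dgrad_eq_zero_of_weightedDiv_eq_zero ha (by rw [hsub, map_sub, h, sub_self])

lemma sum_pinnedOp (a : DE d L → ℝ) (u : DV d L → ℝ) :
    ∑ x, pinnedOp a u x = Fintype.card (DV d L) * u 0 := by
  simp [pinnedOp_apply, weightedDiv_apply, Finset.sum_add_distrib, sum_dstar]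

lemma isUnit_pinnedOp (ha : ∀ b, 0 < a b) : IsUnit (pinnedOp a) := by
  have hinj : Function.Injective (pinnedOp a) := by
    refine (injective_iff_map_eq_zero _).2 fun u hu => ?_
    have h0 : u 0 = 0 := by simpa [hu, NeZero.ne L] using sum_pinnedOp a u
    have hgrad : dgrad d L u = 0 := dgrad_eq_zero_of_weightedDiv_eq_zero ha <| by
      funext x
      simpa [pinnedOp_apply, h0] using congrFun hu x
    funext x
    rw [apply_eq_apply_zero_of_dgrad_eq_zero hgrad x, h0, Pi.zero_apply]
  exact ContinuousLinearMap.isUnit_iff_bijective.2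
    ⟨hinj, LinearMap.injective_iff_surjective.1 hinj⟩

def pinnedSolve (a : DE d L → ℝ) (f : DV d L → ℝ) : DV d L → ℝ :=
  Ring.inverse (pinnedOp a) f

lemma pinnedOp_pinnedSolve (ha : ∀ b, 0 < a b) (f : DV d L → ℝ) :
    pinnedOp a (pinnedSolve a f) = f :=
  congr($(Ring.mul_inverse_cancel _ (isUnit_pinnedOp ha)) f)

lemma weightedDiv_dgrad_pinnedSolve (ha : ∀ b, 0 < a b) {f : DV d L → ℝ}
    (hf : ∑ x, f x = 0) : weightedDiv a (dgrad d L (pinnedSolve a f)) = f := by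
  have hsol := pinnedOp_pinnedSolve ha f
  have h0 : pinnedSolve a f 0 = 0 := by
    simpa [hsol, hf, NeZero.ne L] using sum_pinnedOp a (pinnedSolve a f)
  funext x
  simpa [pinnedOp_apply, h0] using congrFun hsol x

def edgeField (ξ : Fin d → ℝ) : DE d L → ℝ := fun b => ξ b.2

def corrector (ξ : Fin d → ℝ) (a : DE d L → ℝ) : DV d L → ℝ :=
  pinnedSolve a (-weightedDiv a (edgeField ξ))

def flux (ξ : Fin d → ℝ) (a : DE d L → ℝ) : DE d L → ℝ :=
  dgrad d L (corrector ξ a) + edgeField ξ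

/-- The gradient along `e` of the Green function `G(a; ·, y)` in its second variable `y`. -/
def green (a : DE d L → ℝ) (e : DE d L) : DV d L → ℝ :=
  pinnedSolve a (dstar d L (Pi.single e 1))

def greenGrad (a : DE d L → ℝ) (b e : DE d L) : ℝ := dgrad d L (green a e) b

lemma weightedDiv_dgrad_corrector (ha : ∀ b, 0 < a b) (ξ : Fin d → ℝ) :
    weightedDiv a (dgrad d L (corrector ξ a)) = -weightedDiv a (edgeField ξ) :=
  weightedDiv_dgrad_pinnedSolve ha (by simp [weightedDiv_apply, sum_dstar])

lemma weightedDiv_dgrad_green (ha : ∀ b, 0 < a b) (e : DE d L) :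
    weightedDiv a (dgrad d L (green a e)) = dstar d L (Pi.single e 1) :=
  weightedDiv_dgrad_pinnedSolve ha (sum_dstar _)

lemma dgrad_eq_of_isDCorrector (ha : ∀ b, 0 < a b) {ξ : Fin d → ℝ} {φ : DV d L → ℝ}
    (hφ : IsDCorrector d L a ξ φ) : dgrad d L φ = dgrad d L (corrector ξ a) := by
  refine dgrad_eq_of_weightedDiv_eq ha ?_
  have h : weightedDiv a (dgrad d L φ + edgeField ξ) = 0 := funext fun x => by
    rw [weightedDiv_apply]
    exact hφ.2 x
  rw [weightedDiv_dgrad_corrector ha, eq_neg_iff_add_eq_zero, ← map_add, h]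

lemma weightedDiv_single (e : DE d L) (w : DE d L → ℝ) :
    weightedDiv (Pi.single e 1) w = w e • dstar d L (Pi.single e 1) := by
  have h : (Pi.single e 1 : DE d L → ℝ) * w = w e • Pi.single e 1 := by
    rw [← Pi.single_mul_left, one_mul, ← Pi.single_smul', smul_eq_mul, mul_one]
  rw [← divCLM_apply, ← map_smul, ← h]
  rfl

/-- Differentiating `∇*(a (∇φ + ξ)) = 0` in the direction `v` gives
`∇*(a ∇φ') = -∇*(v (∇φ + ξ))`. -/
def correctorDeriv (ξ : Fin d → ℝ) (a : DE d L → ℝ) : (DE d L → ℝ) →L[ℝ] (DV d L → ℝ) :=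
  -(Ring.inverse (pinnedOp a)).comp (weightedDiv.flip (flux ξ a))

lemma hasFDerivAt_corrector (ha : ∀ b, 0 < a b) (ξ : Fin d → ℝ) :
    HasFDerivAt (corrector ξ) (correctorDeriv ξ a) a := by
  have hrhs :=
    (weightedDiv.hasFDerivAt.clm_apply (hasFDerivAt_const (edgeField (L := L) ξ) a)).neg
  have h := (hasFDerivAt_pinnedOp a).ringInverse_apply hrhs (isUnit_pinnedOp ha)
  unfold corrector pinnedSolve
  refine h.congr_fderiv ?_
  ext1 v
  have hflux : weightedDiv v (flux ξ a) = divGradCLM v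
      (Ring.inverse (pinnedOp a) (-weightedDiv a (edgeField ξ))) + weightedDiv v (edgeField ξ) :=
    map_add _ _ _
  simp only [correctorDeriv, ContinuousLinearMap.comp_apply, ContinuousLinearMap.comp_zero,
    zero_add, ContinuousLinearMap.flip_apply, Pi.neg_apply, hflux, map_add, map_neg, map_sub,
    sub_apply, neg_apply]
  abel

lemma correctorDeriv_single (ξ : Fin d → ℝ) (e : DE d L) :
    correctorDeriv ξ a (Pi.single e 1) = -(flux ξ a e • green a e) := by
  simp [correctorDeriv, green, pinnedSolve, weightedDiv_single]

lemma hasFDerivAt_flux (ha : ∀ b, 0 < a b) (ξ : Fin d → ℝ) (b : DE d L) :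
    HasFDerivAt (fun a' => flux ξ a' b)
      ((ContinuousLinearMap.proj b ∘L gradCLM) ∘L correctorDeriv ξ a) a :=
  ((ContinuousLinearMap.proj b ∘L gradCLM).hasFDerivAt.comp a
    (hasFDerivAt_corrector ha ξ)).add_const _

lemma fderiv_flux_single (ha : ∀ b, 0 < a b) (ξ : Fin d → ℝ) (b e : DE d L) :
    fderiv ℝ (fun a' => flux ξ a' b) a (Pi.single e 1) = -(flux ξ a e * greenGrad a b e) := by
  simp [(hasFDerivAt_flux ha ξ b).fderiv, correctorDeriv_single, greenGrad, map_neg, map_smul]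

lemma continuousAt_greenGrad (ha : ∀ b, 0 < a b) (b e : DE d L) :
    ContinuousAt (fun a' => greenGrad a' b e) a :=
  ((ContinuousLinearMap.proj b ∘L gradCLM).hasFDerivAt.comp a
    ((hasFDerivAt_pinnedOp a).ringInverse_apply (hasFDerivAt_const _ a)
      (isUnit_pinnedOp ha))).continuousAt

lemma sum_mul_greenGrad_mul (ha : ∀ b, 0 < a b) (e : DE d L) (v : DV d L → ℝ) :
    ∑ b, a b * greenGrad a b e * dgrad d L v b = dgrad d L v e := by
  simp only [greenGrad]
  rw [← sum_weightedDiv_dgrad_mul, weightedDiv_dgrad_green ha, sum_dstar_mul]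
  simp [Pi.single_apply]

lemma greenGrad_comm (ha : ∀ b, 0 < a b) (b e : DE d L) :
    greenGrad a b e = greenGrad a e b := by
  have h1 : ∑ c, a c * greenGrad a c e * greenGrad a c b = greenGrad a e b :=
    sum_mul_greenGrad_mul ha e (green a b)
  have h2 : ∑ c, a c * greenGrad a c b * greenGrad a c e = greenGrad a b e :=
    sum_mul_greenGrad_mul ha b (green a e)
  rw [← h1, ← h2]
  exact Finset.sum_congr rfl fun c _ => by ring

lemma sum_mul_greenGrad_sq (ha : ∀ b, 0 < a b) (e : DE d L) :
    ∑ b, a b * greenGrad a b e ^ 2 = greenGrad a e e := by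
  simpa [greenGrad, sq, mul_assoc] using sum_mul_greenGrad_mul ha e (green a e)

lemma sum_greenGrad_sq_le {lam : ℝ} (hlam : 0 < lam) (ha : ∀ b, lam ≤ a b) (e : DE d L) :
    ∑ b, greenGrad a b e ^ 2 ≤ (lam ^ 2)⁻¹ := by
  have hpos (b : DE d L) : 0 < a b := hlam.trans_le (ha b)
  have hdiag := sum_mul_greenGrad_sq hpos e
  set X := greenGrad a e e
  have hterms : ∀ b ∈ Finset.univ, 0 ≤ a b * greenGrad a b e ^ 2 := fun b _ =>
    mul_nonneg (hpos b).le (sq_nonneg _)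
  have hX : lam * X ^ 2 ≤ X := calc
    lam * X ^ 2 ≤ a e * greenGrad a e e ^ 2 := by gcongr; exact ha e
    _ ≤ X := hdiag ▸ Finset.single_le_sum hterms (Finset.mem_univ e)
  have hlamX : lam * X ≤ 1 := by
    by_contra! h
    have hXpos : 0 < X := pos_of_mul_pos_right (one_pos.trans h) hlam.le
    nlinarith
  have hS : lam * ∑ b, greenGrad a b e ^ 2 ≤ X := by
    rw [← hdiag, Finset.mul_sum]
    gcongr with b
    exact ha b
  rw [← mul_one (lam ^ 2)⁻¹, le_inv_mul_iff₀ (by positivity)]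
  nlinarith

lemma weightedDiv_shift (a w : DE d L → ℝ) (z x : DV d L) :
    weightedDiv (fun b => a (b.1 + z, b.2)) (fun b => w (b.1 + z, b.2)) x
      = weightedDiv a w (x + z) := by
  simp only [weightedDiv_apply]
  exact dstar_comp_add (fun b => a b * w b) z x

lemma dgrad_eq_shift_of_weightedDiv_eq (ha : ∀ b, 0 < a b) (z : DV d L) {u v : DV d L → ℝ}
    (h : ∀ x, weightedDiv (fun b => a (b.1 + z, b.2)) (dgrad d L v) x
      = weightedDiv a (dgrad d L u) (x + z)) (b : DE d L) :
    dgrad d L v b = dgrad d L u (b.1 + z, b.2) := by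
  have hshift : dgrad d L (fun x => u (x + z)) = fun b => dgrad d L u (b.1 + z, b.2) :=
    funext (dgrad_comp_add u z)
  rw [← dgrad_comp_add, dgrad_eq_of_weightedDiv_eq (fun b => ha _) (u := v)
    (v := fun x => u (x + z)) (funext fun x => by rw [h, hshift, weightedDiv_shift])]

lemma flux_shift (ha : ∀ b, 0 < a b) (ξ : Fin d → ℝ) (z : DV d L) (b : DE d L) :
    flux ξ (fun c => a (c.1 + z, c.2)) b = flux ξ a (b.1 + z, b.2) := by
  have hpos : ∀ c : DE d L, 0 < a (c.1 + z, c.2) := fun c => ha _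
  have hcorr := dgrad_eq_shift_of_weightedDiv_eq ha z (u := corrector ξ a)
    (v := corrector ξ (fun c => a (c.1 + z, c.2))) (fun x => by
      rw [weightedDiv_dgrad_corrector hpos, weightedDiv_dgrad_corrector ha, Pi.neg_apply,
        Pi.neg_apply, ← weightedDiv_shift]
      rfl) b
  simp only [flux, Pi.add_apply, hcorr]
  rfl

lemma greenGrad_shift (ha : ∀ b, 0 < a b) (z : DV d L) (b e : DE d L) :
    greenGrad (fun c => a (c.1 + z, c.2)) b e = greenGrad a (b.1 + z, b.2) (e.1 + z, e.2) :=
  dgrad_eq_shift_of_weightedDiv_eq ha z (fun x => by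
    rw [weightedDiv_dgrad_green (fun c => ha _), weightedDiv_dgrad_green ha, ← dstar_comp_add,
      single_comp_shift]) b

/-- `Φ` is only determined on `{a ≥ λ}`, so at a point of its boundary `fderiv` is either the
one-sided derivative along the coordinate directions (which point into that set) or, when `Φ` is
not differentiable there, `0`. -/
lemma sq_fderiv_le {lam : ℝ} (hlam : 0 < lam) {ξ : Fin d → ℝ} {Φ : (DE d L → ℝ) → DV d L → ℝ}
    (hΦ : ∀ a : DE d L → ℝ, (∀ b, lam ≤ a b) → IsDCorrector d L a ξ (Φ a))
    (ha : ∀ b, lam ≤ a b) (b e : DE d L) :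
    fderiv ℝ (fun a' => dgrad d L (Φ a') b + ξ b.2) a (Pi.single e 1) ^ 2
      ≤ (flux ξ a e * greenGrad a b e) ^ 2 := by
  have hpos {a' : DE d L → ℝ} (ha' : ∀ c, lam ≤ a' c) (c : DE d L) : 0 < a' c :=
    hlam.trans_le (ha' c)
  by_cases hdiff : DifferentiableAt ℝ (fun a' => dgrad d L (Φ a') b + ξ b.2) a
  · rw [hdiff.fderiv_apply_eq_of_eq_on_ray
      (hasFDerivAt_flux (hpos ha) ξ b).differentiableAt.hasFDerivAt, fderiv_flux_single (hpos ha),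
      neg_sq]
    intro t ht
    have hcone (c : DE d L) : lam ≤ (a + t • (Pi.single e 1 : DE d L → ℝ)) c := by
      have hsingle : 0 ≤ (Pi.single e 1 : DE d L → ℝ) c := by
        rw [Pi.single_apply]
        split_ifs <;> norm_num
      simpa using le_add_of_le_of_nonneg (ha c) (mul_nonneg ht hsingle)
    rw [dgrad_eq_of_isDCorrector (hpos hcone) (hΦ _ hcone)]
    rfl
  · rw [fderiv_zero_of_not_differentiableAt hdiff]
    simpa using sq_nonneg _

lemma rpow_sum_sq_fderiv_le {lam : ℝ} (hlam : 0 < lam) {ξ : Fin d → ℝ}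
    {Φ : (DE d L → ℝ) → DV d L → ℝ}
    (hΦ : ∀ a : DE d L → ℝ, (∀ b, lam ≤ a b) → IsDCorrector d L a ξ (Φ a))
    (ha : ∀ b, lam ≤ a b) {p : ℝ} (hp : 1 ≤ p) (b : DE d L) :
    (∑ e, fderiv ℝ (fun a' => dgrad d L (Φ a') b + ξ b.2) a (Pi.single e 1) ^ 2) ^ p
      ≤ (lam ^ 2)⁻¹ ^ (p - 1) * ∑ e, greenGrad a b e ^ 2 * |flux ξ a e| ^ (2 * p) := by
  have hpos (c : DE d L) : 0 < a c := hlam.trans_le (ha c)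
  have hsq_rpow (x : ℝ) : (x ^ 2) ^ p = |x| ^ (2 * p) := by
    rw [← sq_abs, Real.rpow_mul (abs_nonneg x), ← Real.rpow_natCast]
    norm_num
  calc (∑ e, fderiv ℝ (fun a' => dgrad d L (Φ a') b + ξ b.2) a (Pi.single e 1) ^ 2) ^ p
      ≤ (∑ e, greenGrad a b e ^ 2 * flux ξ a e ^ 2) ^ p := by
        gcongr with e
        exact (sq_fderiv_le hlam hΦ ha b e).trans_eq (by ring)
    _ ≤ (∑ e, greenGrad a b e ^ 2) ^ (p - 1) * ∑ e, greenGrad a b e ^ 2 * (flux ξ a e ^ 2) ^ p :=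
        Real.rpow_inner_le_weight_mul_Lp_of_nonneg _ hp _ _ (fun _ => sq_nonneg _)
          (fun _ => sq_nonneg _)
    _ ≤ (lam ^ 2)⁻¹ ^ (p - 1) * ∑ e, greenGrad a b e ^ 2 * |flux ξ a e| ^ (2 * p) := by
        simp only [hsq_rpow, greenGrad_comm hpos b]
        gcongr
        exact sum_greenGrad_sq_le hlam ha b

lemma aemeasurable_of_continuousAt_of_ae_pos {μ : Measure (DE d L → ℝ)}
    (hμ : ∀ᵐ a ∂μ, ∀ b, 0 < a b) {f : (DE d L → ℝ) → ℝ}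
    (hf : ∀ a : DE d L → ℝ, (∀ b, 0 < a b) → ContinuousAt f a) : AEMeasurable f μ := by
  have hopen : IsOpen {a : DE d L → ℝ | ∀ b, 0 < a b} := by
    simpa only [Set.ofPred_forall] using
      isOpen_iInter_of_finite fun b => isOpen_lt continuous_const (continuous_apply b)
  rw [← Measure.restrict_eq_self_of_ae_mem hμ]
  exact ContinuousOn.aemeasurable (fun a ha => (hf a ha).continuousWithinAt) hopen.measurableSet

def greenFluxWeight (p : ℝ) (ξ : Fin d → ℝ) (a : DE d L → ℝ) (b e : DE d L) : ENNReal :=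
  ENNReal.ofReal (greenGrad a b e ^ 2 * |flux ξ a e| ^ (2 * p))

lemma aemeasurable_greenFluxWeight {μ : Measure (DE d L → ℝ)} (hμ : ∀ᵐ a ∂μ, ∀ b, 0 < a b)
    (p : ℝ) (ξ : Fin d → ℝ) (b e : DE d L) :
    AEMeasurable (fun a => greenFluxWeight p ξ a b e) μ := by
  have hG := aemeasurable_of_continuousAt_of_ae_pos hμ fun a ha => continuousAt_greenGrad ha b e
  have hF := aemeasurable_of_continuousAt_of_ae_pos hμ fun a ha =>
    (hasFDerivAt_flux ha ξ e).continuousAt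
  exact ((hG.pow_const 2).mul (hF.abs.pow_const (2 * p))).ennreal_ofReal

lemma greenFluxWeight_shift (ha : ∀ b, 0 < a b) (p : ℝ) (ξ : Fin d → ℝ) (z : DV d L)
    (b e : DE d L) :
    greenFluxWeight p ξ (fun c => a (c.1 + z, c.2)) b e
      = greenFluxWeight p ξ a (b.1 + z, b.2) (e.1 + z, e.2) := by
  simp only [greenFluxWeight, greenGrad_shift ha, flux_shift ha]

/-- The mass-transport principle on the torus. -/
lemma sum_lintegral_sum_eq_of_stationary {μ : Measure (DE d L → ℝ)}
    (hstat : ∀ z : DV d L,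
      μ.map (fun (a : DE d L → ℝ) => fun b : DE d L => a (b.1 + z, b.2)) = μ)
    {H : (DE d L → ℝ) → DE d L → DE d L → ENNReal}
    (hH : ∀ b e, AEMeasurable (fun a => H a b e) μ)
    (hcov : ∀ z : DV d L, ∀ᵐ a ∂μ, ∀ b e,
      H (fun c => a (c.1 + z, c.2)) b e = H a (b.1 + z, b.2) (e.1 + z, e.2)) :
    ∑ i, ∫⁻ a, ∑ e, H a (0, i) e ∂μ = ∑ j, ∫⁻ a, ∑ b, H a b (0, j) ∂μ := by
  have htransport (i j : Fin d) (z : DV d L) :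
      ∫⁻ a, H a (0, i) (z, j) ∂μ = ∫⁻ a, H a (-z, i) (0, j) ∂μ := by
    have hshift : Measurable fun (a : DE d L → ℝ) (c : DE d L) => a (c.1 + -z, c.2) := by
      fun_prop
    calc ∫⁻ a, H a (0, i) (z, j) ∂μ
        = ∫⁻ a, H a (0, i) (z, j) ∂(μ.map fun a c => a (c.1 + -z, c.2)) := by rw [hstat]
      _ = ∫⁻ a, H (fun c => a (c.1 + -z, c.2)) (0, i) (z, j) ∂μ :=
        lintegral_map' ((hstat (-z)).symm ▸ hH _ _) hshift.aemeasurable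
      _ = ∫⁻ a, H a (-z, i) (0, j) ∂μ :=
        lintegral_congr_ae ((hcov (-z)).mono fun a ha => by simp [ha])
  calc ∑ i, ∫⁻ a, ∑ e, H a (0, i) e ∂μ
      = ∑ i, ∑ z : DV d L, ∑ j, ∫⁻ a, H a (-z, i) (0, j) ∂μ := by
        refine Finset.sum_congr rfl fun i _ => ?_
        rw [lintegral_finsetSum' _ fun e _ => hH _ e, Fintype.sum_prod_type]
        simp only [htransport]
    _ = ∑ j, ∑ z : DV d L, ∑ i, ∫⁻ a, H a (-z, i) (0, j) ∂μ :=
        Finset.sum_comm.trans ((Finset.sum_congr rfl fun _ _ => Finset.sum_comm).trans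
          Finset.sum_comm)
    _ = ∑ j, ∫⁻ a, ∑ b, H a b (0, j) ∂μ := by
        refine Finset.sum_congr rfl fun j _ => ?_
        rw [lintegral_finsetSum' _ fun b _ => hH b _, Fintype.sum_prod_type]
        exact Fintype.sum_equiv (Equiv.neg _) _ _ fun z => rfl

section Expectations

variable {μ : Measure (DE d L → ℝ)} {lam p : ℝ} {ξ : Fin d → ℝ}
  {Φ : (DE d L → ℝ) → DV d L → ℝ}

lemma lintegral_rpow_sum_sq_fderiv_le (hlam : 0 < lam) (hsupp : ∀ᵐ a ∂μ, ∀ b, lam ≤ a b)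
    (hΦ : ∀ a : DE d L → ℝ, (∀ b, lam ≤ a b) → IsDCorrector d L a ξ (Φ a)) (hp : 1 ≤ p)
    (b : DE d L) :
    ∫⁻ a, ENNReal.ofReal
        ((∑ e, fderiv ℝ (fun a' => dgrad d L (Φ a') b + ξ b.2) a (Pi.single e 1) ^ 2) ^ p) ∂μ
      ≤ ENNReal.ofReal ((lam ^ 2)⁻¹ ^ (p - 1)) * ∫⁻ a, ∑ e, greenFluxWeight p ξ a b e ∂μ := by
  rw [← lintegral_const_mul' _ _ ENNReal.ofReal_ne_top]
  refine lintegral_mono_ae (hsupp.mono fun a ha => ?_)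
  simp only [greenFluxWeight]
  rw [← ENNReal.ofReal_sum_of_nonneg fun e _ => by positivity,
    ← ENNReal.ofReal_mul (by positivity)]
  exact ENNReal.ofReal_le_ofReal (rpow_sum_sq_fderiv_le hlam hΦ ha hp b)

lemma lintegral_sum_greenFluxWeight_le (hlam : 0 < lam) (hsupp : ∀ᵐ a ∂μ, ∀ b, lam ≤ a b)
    (hΦ : ∀ a : DE d L → ℝ, (∀ b, lam ≤ a b) → IsDCorrector d L a ξ (Φ a)) (e : DE d L) :
    ∫⁻ a, ∑ b, greenFluxWeight p ξ a b e ∂μ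
      ≤ ENNReal.ofReal (lam ^ 2)⁻¹ *
        ∫⁻ a, ENNReal.ofReal (|dgrad d L (Φ a) e + ξ e.2| ^ (2 * p)) ∂μ := by
  rw [← lintegral_const_mul' _ _ ENNReal.ofReal_ne_top]
  refine lintegral_mono_ae (hsupp.mono fun a ha => ?_)
  have hpos (c : DE d L) : 0 < a c := hlam.trans_le (ha c)
  have hflux : flux ξ a e = dgrad d L (Φ a) e + ξ e.2 := by
    rw [dgrad_eq_of_isDCorrector hpos (hΦ a ha)]
    rfl
  simp only [greenFluxWeight]
  rw [← ENNReal.ofReal_sum_of_nonneg fun b _ => by positivity, ← Finset.sum_mul,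
    ← ENNReal.ofReal_mul (by positivity), hflux]
  exact ENNReal.ofReal_le_ofReal
    (mul_le_mul_of_nonneg_right (sum_greenGrad_sq_le hlam ha e) (by positivity))

end Expectations

end DiscHom

open DiscHom

theorem statement12_general (d L : ℕ) [NeZero L]
    (lam : ℝ) (hlam : lam ∈ Set.Ioo (0 : ℝ) 1)
    (μ : Measure (DE d L → ℝ))
    (hsupp : ∀ᵐ a ∂μ, ∀ b : DE d L, lam ≤ a b)
    (hstat : ∀ z : DV d L,
      μ.map (fun (a : DE d L → ℝ) => fun b : DE d L => a (b.1 + z, b.2)) = μ)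
    (ξ : EuclideanSpace ℝ (Fin d))
    (Φ : (DE d L → ℝ) → DV d L → ℝ)
    (hΦ : ∀ a : DE d L → ℝ, (∀ b, lam ≤ a b) → IsDCorrector d L a (fun i => ξ i) (Φ a))
    (p : ℝ) (hp : 1 ≤ p) :
    ∑ i : Fin d, ∫⁻ a, ENNReal.ofReal
        ((∑ e : DE d L,
            fderiv ℝ (fun a' => dgrad d L (Φ a') ((0 : DV d L), i) + ξ i) a
              (Pi.single e 1) ^ 2) ^ p) ∂μ
      ≤ ENNReal.ofReal ((lam ^ 2)⁻¹ ^ p) *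
        ∑ i : Fin d, ∫⁻ a, ENNReal.ofReal
          (|dgrad d L (Φ a) ((0 : DV d L), i) + ξ i| ^ (2 * p)) ∂μ := by
  have hlam0 : 0 < lam := hlam.1
  have hpos : ∀ᵐ a ∂μ, ∀ b, 0 < a b := hsupp.mono fun a ha b => hlam0.trans_le (ha b)
  calc _ ≤ ∑ i, ENNReal.ofReal ((lam ^ 2)⁻¹ ^ (p - 1)) *
          ∫⁻ a, ∑ e, greenFluxWeight p (fun i => ξ i) a (0, i) e ∂μ :=
        Finset.sum_le_sum fun i _ => lintegral_rpow_sum_sq_fderiv_le hlam0 hsupp hΦ hp (0, i)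
    _ = ENNReal.ofReal ((lam ^ 2)⁻¹ ^ (p - 1)) *
          ∑ j, ∫⁻ a, ∑ b, greenFluxWeight p (fun i => ξ i) a b (0, j) ∂μ := by
        rw [← Finset.mul_sum, sum_lintegral_sum_eq_of_stationary hstat
          (aemeasurable_greenFluxWeight hpos p _)
          fun z => hpos.mono fun a ha => greenFluxWeight_shift ha p _ z]
    _ ≤ ENNReal.ofReal ((lam ^ 2)⁻¹ ^ (p - 1)) * ∑ j, ENNReal.ofReal (lam ^ 2)⁻¹ *
          ∫⁻ a, ENNReal.ofReal (|dgrad d L (Φ a) ((0 : DV d L), j) + ξ j| ^ (2 * p)) ∂μ := by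
        gcongr with j
        exact lintegral_sum_greenFluxWeight_le hlam0 hsupp hΦ (0, j)
    _ = _ := by
        rw [← Finset.mul_sum, ← mul_assoc, ← ENNReal.ofReal_mul (by positivity),
          ← Real.rpow_add_one (by positivity), sub_add_cancel]

/-- **Step 3 in the proof of Theorem 3.** -/
theorem statement12 (d L : ℕ) [NeZero L] (hd : 2 ≤ d) (hL : 1 ≤ L)
    (lam : ℝ) (hlam : lam ∈ Set.Ioo (0 : ℝ) 1)
    (μ : Measure (DE d L → ℝ)) [IsProbabilityMeasure μ]
    (hsupp : ∀ᵐ a ∂μ, ∀ b : DE d L, lam ≤ a b)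
    (hstat : ∀ z : DV d L,
      μ.map (fun (a : DE d L → ℝ) => fun b : DE d L => a (b.1 + z, b.2)) = μ)
    (ξ : EuclideanSpace ℝ (Fin d)) (hξ : ‖ξ‖ ≤ 1)
    (Φ : (DE d L → ℝ) → DV d L → ℝ)
    (hΦ : ∀ a : DE d L → ℝ, (∀ b, lam ≤ a b) → IsDCorrector d L a (fun i => ξ i) (Φ a))
    (p : ℝ) (hp : 1 ≤ p) :
    ∑ i : Fin d, ∫⁻ a, ENNReal.ofReal
        ((∑ e : DE d L,
            fderiv ℝ (fun a' => dgrad d L (Φ a') ((0 : DV d L), i) + ξ i) a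
              (Pi.single e 1) ^ 2) ^ p) ∂μ
      ≤ ENNReal.ofReal ((lam ^ 2)⁻¹ ^ p) *
        ∑ i : Fin d, ∫⁻ a, ENNReal.ofReal
          (|dgrad d L (Φ a) ((0 : DV d L), i) + ξ i| ^ (2 * p)) ∂μ :=
  statement12_general d L lam hlam μ hsupp hstat ξ Φ hΦ p hp
end
end

section
/- Let K > 0 and let F : [2,∞) → (0,∞) be differentiable and satisfy the differential inequality q·F'(q) ≤ F(q)·ln F(q) + K·q²·F(q) for all q ≥ 2. Then for every p ≥ 1, F(2p)^{1/p} ≤ exp(4K(p−1))·F(2). -/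
/-!
Dividing the differential inequality by `q² F(q)` says exactly that
`q ↦ K q - ln F(q) / q` has nonnegative derivative. Comparing its values at `2` and `2p`
gives `ln F(2p) / p ≤ ln F(2) + 4K(p - 1)`, and exponentiating yields the bound.
-/

open Set Real

theorem hasDerivWithinAt_mul_sub_log_div_self {F F' : ℝ → ℝ} {s : Set ℝ} {q : ℝ} (K : ℝ)
    (hFq : 0 < F q) (hq : q ≠ 0) (hF : HasDerivWithinAt F (F' q) s q) :
    HasDerivWithinAt (fun x => K * x - log (F x) / x)
      (K - (q * F' q - F q * log (F q)) / (F q * q ^ 2)) s q := by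
  have hlog := (hF.log hFq.ne').div (hasDerivWithinAt_id q s) hq
  refine ((hasDerivWithinAt_id q s).const_mul K |>.sub hlog).congr_deriv ?_
  simp only [id, mul_one]
  field_simp

theorem monotoneOn_mul_sub_log_div_self {F F' : ℝ → ℝ} {a K : ℝ} (ha : 0 < a)
    (hpos : ∀ q, a ≤ q → 0 < F q)
    (hderiv : ∀ q, a ≤ q → HasDerivWithinAt F (F' q) (Ici a) q)
    (hineq : ∀ q, a ≤ q → q * F' q ≤ F q * log (F q) + K * q ^ 2 * F q) :
    MonotoneOn (fun q => K * q - log (F q) / q) (Ici a) := by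
  have hG : ∀ q ∈ Ici a, HasDerivWithinAt (fun x => K * x - log (F x) / x)
      (K - (q * F' q - F q * log (F q)) / (F q * q ^ 2)) (Ici a) q := fun q hq =>
    hasDerivWithinAt_mul_sub_log_div_self K (hpos q hq) (ha.trans_le hq).ne' (hderiv q hq)
  refine monotoneOn_of_hasDerivWithinAt_nonneg (convex_Ici a)
    (fun q hq => (hG q hq).continuousWithinAt)
    (fun q hq => (hG q (interior_subset hq)).mono interior_subset) fun q hq => ?_
  have hq : a ≤ q := interior_subset hq
  have hFq := hpos q hq
  have hq0 : 0 < q := ha.trans_le hq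
  rw [sub_nonneg, div_le_iff₀ (by positivity)]
  linarith [hineq q hq]

theorem statement13_general (K : ℝ) (F F' : ℝ → ℝ)
    (hpos : ∀ q : ℝ, 2 ≤ q → 0 < F q)
    (hderiv : ∀ q : ℝ, 2 ≤ q → HasDerivWithinAt F (F' q) (Set.Ici 2) q)
    (hineq : ∀ q : ℝ, 2 ≤ q → q * F' q ≤ F q * Real.log (F q) + K * q ^ 2 * F q) :
    ∀ p : ℝ, 1 ≤ p → F (2 * p) ^ (1 / p) ≤ Real.exp (4 * K * (p - 1)) * F 2 := by
  intro p hp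
  have h2p : (2 : ℝ) ≤ 2 * p := by linarith
  have hmono : K * 2 - log (F 2) / 2 ≤ K * (2 * p) - log (F (2 * p)) / (2 * p) :=
    monotoneOn_mul_sub_log_div_self two_pos hpos hderiv hineq self_mem_Ici h2p h2p
  have hrescale : 1 / p * log (F (2 * p)) = 2 * (log (F (2 * p)) / (2 * p)) := by
    field_simp
  have hlog : 1 / p * log (F (2 * p)) ≤ 4 * K * (p - 1) + log (F 2) := by
    linarith
  calc F (2 * p) ^ (1 / p) = exp (1 / p * log (F (2 * p))) := by
        rw [rpow_def_of_pos (hpos _ h2p), mul_comm]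
    _ ≤ exp (4 * K * (p - 1) + log (F 2)) := exp_le_exp.mpr hlog
    _ = exp (4 * K * (p - 1)) * F 2 := by rw [exp_add, exp_log (hpos 2 le_rfl)]

/-- **Herbst-type ODE lemma.** If `F : [2,∞) → (0,∞)` is differentiable and
satisfies `q F'(q) ≤ F(q) ln F(q) + K q² F(q)`, then `F(2p)^{1/p} ≤ exp(4K(p-1)) F(2)`. -/
theorem statement13 (K : ℝ) (hK : 0 < K) (F F' : ℝ → ℝ)
    (hpos : ∀ q : ℝ, 2 ≤ q → 0 < F q)
    (hderiv : ∀ q : ℝ, 2 ≤ q → HasDerivWithinAt F (F' q) (Set.Ici 2) q)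
    (hineq : ∀ q : ℝ, 2 ≤ q → q * F' q ≤ F q * Real.log (F q) + K * q ^ 2 * F q) :
    ∀ p : ℝ, 1 ≤ p → F (2 * p) ^ (1 / p) ≤ Real.exp (4 * K * (p - 1)) * F 2 :=
  statement13_general K F F' hpos hderiv hineq
end
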